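/- If e₁, …, e_n are pairwise orthogonal nonzero idempotents in a ring R summing to a central idempotent e, and the ring eRe is isomorphic to an n×n matrix ring over a division ring, then each e_i is a primitive idempotent of eRe. -/

import Mathlib

/-!
Splitting `E i = a + b` inside `eRe` produces `n + 1` pairwise orthogonal nonzero idempotents
whose sum is still `e`, so all of them lie in `eRe`. Since `e` is central and `e (1 - e) = 0`,
the quotient map `R → R / (1 - e)` is injective on `eRe`, so they map to `n + 1` orthogonal
nonzero idempotents of `Mₙ(D)`. There, choosing a nonzero row of each gives `n + 1` linearly
independent vectors of `Dⁿ`, which is impossible.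
-/

section CentralIdempotent

variable {R : Type*} [Ring R] {e : R}

theorem mul_eq_zero_of_mem_span_one_sub (he : IsIdempotentElem e)
    (hcentral : ∀ r : R, e * r = r * e) {x : R} (hx : x ∈ TwoSidedIdeal.span {1 - e}) :
    e * x = 0 := by
  induction hx using TwoSidedIdeal.span_induction with
  | mem y hy => rw [Set.mem_singleton_iff.mp hy, mul_sub, mul_one, he.eq, sub_self]
  | zero => exact mul_zero e
  | add y z _ _ hy hz => rw [mul_add, hy, hz, add_zero]
  | neg y _ hy => rw [mul_neg, hy, neg_zero]
  | left_absorb a y _ hy => rw [← mul_assoc, hcentral a, mul_assoc, hy, mul_zero]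
  | right_absorb b y _ hy => rw [← mul_assoc, hy, zero_mul]

theorem eq_zero_of_mk_span_one_sub_eq_zero (he : IsIdempotentElem e)
    (hcentral : ∀ r : R, e * r = r * e) {x : R} (hex : e * x = x)
    (hx : (TwoSidedIdeal.span {1 - e}).ringCon.mk' x = 0) : x = 0 := by
  rw [← TwoSidedIdeal.mem_ker, TwoSidedIdeal.ker_ringCon_mk'] at hx
  rw [← hex, mul_eq_zero_of_mem_span_one_sub he hcentral hx]

end CentralIdempotent

section Split

variable {I M : Type*} [DecidableEq I] [Fintype I] [AddCommGroup M] {E : I → M} {i : I} {a b : M}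

theorem Fintype.sum_update_add_of_eq_add (hi : E i = a + b) :
    ∑ j, Function.update E i a j + b = ∑ j, E j := by
  rw [Finset.sum_update_of_mem (Finset.mem_univ i),
    Finset.sum_eq_add_sum_sdiff_singleton i E (absurd (Finset.mem_univ i)), hi]
  abel

theorem Fintype.sum_option_elim_update_of_eq_add (hi : E i = a + b) :
    ∑ o, Option.elim o b (Function.update E i a) = ∑ j, E j := by
  rw [Fintype.sum_option, Option.elim_none, add_comm]
  exact Fintype.sum_update_add_of_eq_add hi

end Split

namespace OrthogonalIdempotents

variable {R I : Type*} [Ring R] [DecidableEq I] {E : I → R} {i : I} {a b : R}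

theorem update (hE : OrthogonalIdempotents E) (ha : IsIdempotentElem a)
    (haE : a * E i = a) (hEa : E i * a = a) : OrthogonalIdempotents (Function.update E i a) where
  idem j := by
    rcases eq_or_ne j i with rfl | hj
    · simpa using ha
    · simpa [hj] using hE.idem j
  ortho j k hjk := by
    rcases eq_or_ne j i with rfl | hj <;> rcases eq_or_ne k j with rfl | hk
    · exact absurd rfl hjk
    · simp only [Function.update_self, Function.update_of_ne hk]
      rw [← haE, mul_assoc, hE.ortho (Ne.symm hk), mul_zero]
    · exact absurd rfl hjk
    · rcases eq_or_ne k i with rfl | hki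
      · simp only [Function.update_self, Function.update_of_ne hj]
        rw [← hEa, ← mul_assoc, hE.ortho hj, zero_mul]
      · simpa [hj, hki] using hE.ortho hjk

theorem option_update [Fintype I] (hE : OrthogonalIdempotents E) (ha : IsIdempotentElem a)
    (hb : IsIdempotentElem b) (hab : a * b = 0) (hba : b * a = 0) (hi : E i = a + b) :
    OrthogonalIdempotents (Option.elim · b (Function.update E i a)) := by
  have haE : a * E i = a := by rw [hi, mul_add, ha.eq, hab, add_zero]
  have hEa : E i * a = a := by rw [hi, add_mul, ha.eq, hba, add_zero]
  have hbE : b * E i = b := by rw [hi, mul_add, hb.eq, hba, zero_add]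
  have hEb : E i * b = b := by rw [hi, add_mul, hb.eq, hab, zero_add]
  have hsum : ∑ j, Function.update E i a j = ∑ j, E j - b :=
    eq_sub_of_add_eq (Fintype.sum_update_add_of_eq_add hi)
  refine (hE.update ha haE hEa).option b hb ?_ ?_ <;> rw [hsum]
  · rw [mul_sub, ← hbE, mul_assoc, hE.mul_sum_of_mem (Finset.mem_univ i), hbE, hb.eq, sub_self]
  · have hsumE : (∑ j, E j) * E i = E i := by simp [Finset.sum_mul, hE.mul_eq]
    rw [sub_mul, ← hEb, ← mul_assoc, hsumE, hEb, hb.eq, sub_self]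

end OrthogonalIdempotents

open Matrix in
theorem Matrix.card_le_of_orthogonalIdempotents {m ι D : Type*} [Fintype m] [DecidableEq m]
    [Fintype ι] [DivisionRing D] {f : ι → Matrix m m D} (hf : OrthogonalIdempotents f)
    (hne : ∀ j, f j ≠ 0) : Fintype.card ι ≤ Fintype.card m := by
  classical
  have hrow : ∀ j, ∃ k, f j k ≠ 0 := fun j => by
    by_contra! h
    exact hne j (funext h)
  choose k hk using hrow
  -- right multiplication by `f j` kills every row `f j' (k j')` except `f j (k j)`
  have hli : LinearIndependent D fun j => f j (k j) := by
    rw [Fintype.linearIndependent_iff]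
    intro c hc j
    have hproj : ∀ j', f j' (k j') ᵥ* f j = if j' = j then f j (k j) else 0 := fun j' => by
      rw [← mul_apply_eq_vecMul, hf.mul_eq]
      split_ifs with h
      · subst h; rfl
      · rfl
    have := congrArg (· ᵥ* f j) hc
    simp only [sum_vecMul, smul_vecMul, hproj, smul_ite, smul_zero, Finset.sum_ite_eq',
      Finset.mem_univ, if_true, zero_vecMul] at this
    exact (smul_eq_zero.mp this).resolve_right (hk j)
  simpa using hli.fintype_card_le_finrank

theorem orthogonal_idempotents_primitive (R : Type*) [Ring R] (n : ℕ)
    (D : Type*) [DivisionRing D]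
    (e : R) (he : IsIdempotentElem e) (hcentral : ∀ r : R, e * r = r * e)
    (E : Fin n → R) (hidem : ∀ i, IsIdempotentElem (E i)) (hne : ∀ i, E i ≠ 0)
    (horth : ∀ i j, i ≠ j → E i * E j = 0) (hsum : ∑ i, E i = e)
    (hiso : Nonempty
      ((TwoSidedIdeal.span ({1 - e} : Set R)).ringCon.Quotient ≃+* Matrix (Fin n) (Fin n) D)) :
    ∀ i, ¬ ∃ a b : R, e * a * e = a ∧ e * b * e = b ∧
      IsIdempotentElem a ∧ IsIdempotentElem b ∧ a ≠ 0 ∧ b ≠ 0 ∧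
      a * b = 0 ∧ b * a = 0 ∧ E i = a + b := by
  rintro i ⟨a, b, -, -, ha, hb, ha0, hb0, hab, hba, hi⟩
  obtain ⟨ψ⟩ := hiso
  have hE : OrthogonalIdempotents E := ⟨hidem, fun j k hjk => horth j k hjk⟩
  set F : Option (Fin n) → R := (Option.elim · b (Function.update E i a))
  have hF : OrthogonalIdempotents F := hE.option_update ha hb hab hba hi
  have hFe : ∀ o, e * F o = F o := fun o => by
    rw [hcentral, ← hsum, ← Fintype.sum_option_elim_update_of_eq_add hi,
      hF.mul_sum_of_mem (Finset.mem_univ o)]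
  have hF0 : ∀ o, F o ≠ 0 := by
    rintro (_ | j)
    · exact hb0
    · rcases eq_or_ne j i with rfl | hj
      · simpa [F] using ha0
      · simpa [F, hj] using hne j
  let φ : R →+* Matrix (Fin n) (Fin n) D := ψ.toRingHom.comp (RingCon.mk' _)
  have hφF : ∀ o, φ (F o) ≠ 0 := fun o h => hF0 o <|
    eq_zero_of_mk_span_one_sub_eq_zero he hcentral (hFe o) ((map_eq_zero_iff ψ ψ.injective).mp h)
  simpa using Matrix.card_le_of_orthogonalIdempotents (hF.map φ) hφF
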